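/- arXiv:1602.08907 — 2 statements merged into one kernel-verified Lean document; each statement's English description precedes it below -/
import Mathlib

section
/- Let G be a connected simple graph of order n ≥ 9. Then β_p(G) = n−1 if and only if either (i) τ(G) = n−1, or (ii) τ(G) = n−2 and some twin class W of cardinality n−2 induces a complete subgraph of G. -/
open Classical SimpleGraph

noncomputable section

/-- The distance from a vertex to a set of vertices. -/
def setDist {V : Type*} (G : SimpleGraph V) (u : V) (S : Set V) : ℕ :=
  sInf ((G.dist u) '' S)

/-- A locating partition of a graph: a partition of the vertex set such that every
vertex is uniquely determined by its vector of distances to the parts. -/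
def IsLocatingPartition {V : Type*} (G : SimpleGraph V) (P : Set (Set V)) : Prop :=
  Setoid.IsPartition P ∧
    ∀ u v : V, (∀ S ∈ P, setDist G u S = setDist G v S) → u = v

/-- The partition dimension: the minimum cardinality of a locating partition. -/
def partitionDim {V : Type*} (G : SimpleGraph V) : ℕ :=
  sInf {k | ∃ P : Set (Set V), IsLocatingPartition G P ∧ P.ncard = k}

/-- Two vertices are twins if they have the same neighbors other than themselves. -/
def IsTwin {V : Type*} (G : SimpleGraph V) (u v : V) : Prop :=
  G.neighborSet u \ {v} = G.neighborSet v \ {u}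

/-- The twin class of a vertex. -/
def twinClass {V : Type*} (G : SimpleGraph V) (u : V) : Set V :=
  {v | IsTwin G u v}

/-- The twin number: the maximum cardinality of a twin class. -/
def twinNumber {V : Type*} (G : SimpleGraph V) : ℕ :=
  sSup {k | ∃ u : V, (twinClass G u).ncard = k}

/-!
Twins have equal distances to every part not containing them, so distinct twins lie in different
parts of a locating partition and `β_p ≥ τ`. If moreover a twin class `W` is a clique and some
vertex `t ∉ W` is adjacent to all of `W`, a partition all of whose parts meet `W` cannot be
locating, so `β_p > |W|`. Merging a non-twin pair into one part gives a locating partition with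
`n - 1` parts.

Conversely, when neither condition holds, a locating partition with `n - 2` parts is obtained by
merging a triple or two disjoint pairs, each pair in a merged part being resolved by a vertex in
no merged part. The blocks are chosen by a case analysis on the nontrivial twin classes; when
there are no twins at all, counting the triples of a six-set finds a suitable one.
-/

section SetDist

variable {V : Type*} {G : SimpleGraph V} {u w : V} {S : Set V}

lemma setDist_le (hw : w ∈ S) : setDist G u S ≤ G.dist u w :=
  Nat.sInf_le ⟨w, hw, rfl⟩

lemma setDist_singleton (u x : V) : setDist G u {x} = G.dist u x := by
  simp [setDist]

lemma setDist_eq_zero_of_mem (hu : u ∈ S) : setDist G u S = 0 :=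
  Nat.eq_zero_of_le_zero ((setDist_le hu).trans_eq dist_self)

lemma setDist_eq_zero_iff (hG : G.Connected) (hS : S.Nonempty) :
    setDist G u S = 0 ↔ u ∈ S := by
  refine ⟨fun h => ?_, setDist_eq_zero_of_mem⟩
  obtain ⟨w, hw, hdist⟩ := Nat.sInf_mem (hS.image (G.dist u))
  change G.dist u w = setDist G u S at hdist
  rw [h, hG.dist_eq_zero_iff] at hdist
  exact hdist ▸ hw

lemma setDist_eq_one (hG : G.Connected) (hu : u ∉ S) (hw : w ∈ S) (h : G.Adj u w) :
    setDist G u S = 1 := by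
  have h1 : setDist G u S ≤ 1 := (setDist_le hw).trans_eq (dist_eq_one_iff_adj.mpr h)
  have h0 : setDist G u S ≠ 0 := (setDist_eq_zero_iff hG ⟨w, hw⟩).not.mpr hu
  omega

end SetDist

section Twins

variable {V : Type*} {G : SimpleGraph V} {a b c u x : V}

lemma isTwin_iff_forall_adj_iff :
    IsTwin G a b ↔ ∀ x, x ≠ a → x ≠ b → (G.Adj a x ↔ G.Adj b x) := by
  refine ⟨fun h x ha hb => ?_, fun h => Set.ext fun x => ?_⟩
  · simpa [ha, hb] using congrArg (x ∈ ·) h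
  · by_cases ha : x = a
    · subst ha; simp
    by_cases hb : x = b
    · subst hb; simp
    simp [ha, hb, h x ha hb]

lemma IsTwin.adj_iff (h : IsTwin G a b) (ha : x ≠ a) (hb : x ≠ b) : G.Adj a x ↔ G.Adj b x :=
  isTwin_iff_forall_adj_iff.mp h x ha hb

lemma IsTwin.adj_of_adj (h : IsTwin G a b) (hx : G.Adj a x) (hb : x ≠ b) : G.Adj b x :=
  (h.adj_iff (G.ne_of_adj hx).symm hb).mp hx

lemma IsTwin.refl (a : V) : IsTwin G a a := rfl

lemma IsTwin.symm (h : IsTwin G a b) : IsTwin G b a := Eq.symm h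

lemma IsTwin.trans (hab : IsTwin G a b) (hbc : IsTwin G b c) : IsTwin G a c := by
  rw [isTwin_iff_forall_adj_iff] at *
  intro x hxa hxc
  by_cases hxb : x = b
  · subst hxb
    by_cases hac : a = c
    · subst hac; rfl
    rw [adj_comm, hbc a (Ne.symm hxa) hac, adj_comm, hab c (Ne.symm hac) (Ne.symm hxc), adj_comm]
  · exact (hab x hxa hxb).trans (hbc x hxb hxc)

end Twins

section Resolvers

variable {V : Type*} {G : SimpleGraph V} {a a' b b' c c' u v x : V}

lemma IsTwin.dist_le (hG : G.Connected) (h : IsTwin G a b) (ha : x ≠ a) (hb : x ≠ b) :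
    G.dist b x ≤ G.dist a x := by
  obtain ⟨p, hp⟩ := hG.exists_walk_length_eq_dist a x
  cases p with
  | nil => exact absurd rfl ha
  | @cons _ w _ haw q =>
    rw [← hp, Walk.length_cons]
    by_cases hwb : w = b
    · subst hwb
      exact (SimpleGraph.dist_le q).trans (Nat.le_succ _)
    · calc G.dist b x ≤ G.dist b w + G.dist w x := hG.dist_triangle
        _ ≤ 1 + q.length := by
          rw [dist_eq_one_iff_adj.mpr (h.adj_of_adj haw hwb)]
          exact Nat.add_le_add_left (SimpleGraph.dist_le q) 1
        _ = q.length + 1 := add_comm _ _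

lemma IsTwin.dist_eq (hG : G.Connected) (h : IsTwin G a b) (ha : x ≠ a) (hb : x ≠ b) :
    G.dist a x = G.dist b x :=
  le_antisymm (h.symm.dist_le hG hb ha) (h.dist_le hG ha hb)

def resolvers (G : SimpleGraph V) (u v : V) : Set V :=
  {x | G.dist u x ≠ G.dist v x}

lemma resolvers_comm : resolvers G u v = resolvers G v u :=
  Set.ext fun _ => ne_comm

@[simp]
lemma resolvers_self : resolvers G u u = ∅ := by
  simp [resolvers]

lemma isTwin_iff_resolvers_subset (hG : G.Connected) :
    IsTwin G a b ↔ resolvers G a b ⊆ {a, b} := by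
  refine ⟨fun h x hx => ?_, fun h => isTwin_iff_forall_adj_iff.mpr fun x ha hb => ?_⟩
  · by_contra hab
    simp only [Set.mem_insert_iff, Set.mem_singleton_iff, not_or] at hab
    exact hx (h.dist_eq hG hab.1 hab.2)
  · have hd : G.dist a x = G.dist b x := not_not.mp fun hx => by simpa [ha, hb] using h hx
    rw [← dist_eq_one_iff_adj, ← dist_eq_one_iff_adj, hd]

lemma exists_mem_resolvers (hG : G.Connected) (h : ¬IsTwin G a b) :
    ∃ x ∈ resolvers G a b, x ≠ a ∧ x ≠ b := by
  obtain ⟨x, hx, hxab⟩ := Set.not_subset.mp ((isTwin_iff_resolvers_subset hG).not.mp h)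
  simp only [Set.mem_insert_iff, Set.mem_singleton_iff, not_or] at hxab
  exact ⟨x, hx, hxab⟩

lemma mem_resolvers_iff_of_isTwin (hG : G.Connected) (ha : IsTwin G a a') (hb : IsTwin G b b')
    (hxa : x ≠ a) (hxa' : x ≠ a') (hxb : x ≠ b) (hxb' : x ≠ b') :
    x ∈ resolvers G a b ↔ x ∈ resolvers G a' b' := by
  simp only [resolvers, Set.mem_ofPred_eq, ha.dist_eq hG hxa hxa', hb.dist_eq hG hxb hxb']

lemma IsTwin.mem_resolvers (hG : G.Connected) (h : IsTwin G c c') (hc : c ∈ resolvers G a b)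
    (ha : a ≠ c) (ha' : a ≠ c') (hb : b ≠ c) (hb' : b ≠ c') : c' ∈ resolvers G a b := by
  have hd : ∀ y, y ≠ c → y ≠ c' → G.dist y c' = G.dist y c := fun y hy hy' => by
    rw [dist_comm, ← h.dist_eq hG hy hy', dist_comm]
  simpa only [resolvers, Set.mem_ofPred_eq, hd a ha ha', hd b hb hb'] using hc

lemma not_resolvers_subset_of_isTwin (hG : G.Connected) (hab : ¬IsTwin G a b)
    (hc : IsTwin G c c') (hc' : c' ∉ ({a, b, c} : Set V)) : ¬resolvers G a b ⊆ {a, b, c} := by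
  intro hsub
  obtain ⟨x, hx, hxa, hxb⟩ := exists_mem_resolvers hG hab
  obtain rfl : x = c := by simpa [hxa, hxb] using hsub hx
  simp only [Set.mem_insert_iff, Set.mem_singleton_iff, not_or] at hc'
  have := hsub (hc.mem_resolvers hG hx (Ne.symm hxa) (Ne.symm hc'.1) (Ne.symm hxb)
    (Ne.symm hc'.2.1))
  simp [hc'.1, hc'.2.1, hc'.2.2] at this

end Resolvers

section LocatingPartition

variable {V : Type*} {G : SimpleGraph V} {P 𝓑 : Set (Set V)} {W : Set V} {a b t : V}

lemma isLocatingPartition_of_forall_part (hG : G.Connected) (hP : Setoid.IsPartition P)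
    (h : ∀ S ∈ P, ∀ u ∈ S, ∀ v ∈ S, u ≠ v → ∃ T ∈ P, setDist G u T ≠ setDist G v T) :
    IsLocatingPartition G P := by
  refine ⟨hP, fun u v huv => ?_⟩
  obtain ⟨S, ⟨hS, hu⟩, -⟩ := hP.2 u
  by_contra hne
  by_cases hv : v ∈ S
  · obtain ⟨T, hT, hdist⟩ := h S hS u hu v hv hne
    exact hdist (huv T hT)
  · have := huv S hS
    rw [setDist_eq_zero_of_mem hu, eq_comm,
      setDist_eq_zero_iff hG (Setoid.nonempty_of_mem_partition hP hS)] at this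
    exact hv this

lemma IsLocatingPartition.eq_of_isTwin (hG : G.Connected) (hL : IsLocatingPartition G P)
    (h : IsTwin G a b) {S : Set V} (hS : S ∈ P) (ha : a ∈ S) (hb : b ∈ S) : a = b := by
  refine hL.2 a b fun T hT => ?_
  by_cases hTS : T = S
  · subst hTS
    rw [setDist_eq_zero_of_mem ha, setDist_eq_zero_of_mem hb]
  · have hdisj : Disjoint T S := hL.1.pairwiseDisjoint hT hS hTS
    refine congrArg sInf (Set.image_congr fun x hx => h.dist_eq hG ?_ ?_)
    · rintro rfl
      exact Set.disjoint_left.mp hdisj hx ha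
    · rintro rfl
      exact Set.disjoint_left.mp hdisj hx hb

lemma IsLocatingPartition.ncard_le_of_forall_isTwin [Finite V] (hG : G.Connected)
    (hL : IsLocatingPartition G P) (hW : ∀ a ∈ W, ∀ b ∈ W, IsTwin G a b) :
    W.ncard ≤ {T ∈ P | ¬Disjoint T W}.ncard := by
  choose f hfP hf using fun w => (hL.1.2 w).exists
  refine Set.ncard_le_ncard_of_injOn f
    (fun w hw => ⟨hfP w, Set.not_disjoint_iff.mpr ⟨w, hf w, hw⟩⟩) ?_ (Set.toFinite _)
  intro a ha b hb hab
  exact hL.eq_of_isTwin hG (hW a ha b hb) (hfP a) (hf a) (hab ▸ hf b)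

/-- If every part met `W`, the vertex `t` and a vertex of `W` in its part would have the same
distance `1` to every other part. -/
lemma IsLocatingPartition.exists_disjoint_of_isClique (hG : G.Connected)
    (hL : IsLocatingPartition G P) (hW : G.IsClique W) (ht : ∀ w ∈ W, G.Adj t w) :
    ∃ T ∈ P, Disjoint T W := by
  by_contra! hmeet
  obtain ⟨T₀, ⟨hT₀, htT₀⟩, -⟩ := hL.1.2 t
  obtain ⟨a, haT₀, haW⟩ := Set.not_disjoint_iff.mp (hmeet T₀ hT₀)
  have hta : t = a := hL.2 t a fun T hT => by
    by_cases hTT₀ : T = T₀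
    · subst hTT₀
      rw [setDist_eq_zero_of_mem htT₀, setDist_eq_zero_of_mem haT₀]
    obtain ⟨w, hwT, hwW⟩ := Set.not_disjoint_iff.mp (hmeet T hT)
    have hdisj : Disjoint T T₀ := hL.1.pairwiseDisjoint hT hT₀ hTT₀
    have hwa : w ≠ a := by
      rintro rfl
      exact Set.disjoint_left.mp hdisj hwT haT₀
    rw [setDist_eq_one hG (Set.disjoint_right.mp hdisj htT₀) hwT (ht w hwW),
      setDist_eq_one hG (Set.disjoint_right.mp hdisj haT₀) hwT (hW haW hwW hwa.symm)]
  subst hta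
  exact G.irrefl (ht t haW)

def blockPartition (𝓑 : Set (Set V)) : Set (Set V) :=
  𝓑 ∪ (fun x => {x}) '' (⋃₀ 𝓑)ᶜ

lemma isPartition_blockPartition (h𝓑 : 𝓑.PairwiseDisjoint id) (hempty : ∅ ∉ 𝓑) :
    Setoid.IsPartition (blockPartition 𝓑) := by
  refine Set.PairwiseDisjoint.isPartition_of_exists_of_ne_empty ?_ (fun v => ?_) ?_
  · refine Set.pairwiseDisjoint_union.mpr ⟨h𝓑, ?_, ?_⟩
    · rintro _ ⟨x, -, rfl⟩ _ ⟨y, -, rfl⟩ hxy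
      exact Set.disjoint_singleton.mpr fun h => hxy (h ▸ rfl)
    · rintro B hB _ ⟨x, hx, rfl⟩ -
      exact Set.disjoint_singleton_right.mpr fun h => hx ⟨B, hB, h⟩
  · by_cases hv : v ∈ ⋃₀ 𝓑
    · obtain ⟨B, hB, hvB⟩ := hv
      exact ⟨B, Or.inl hB, hvB⟩
    · exact ⟨{v}, Or.inr ⟨v, hv, rfl⟩, rfl⟩
  · rintro (h | ⟨x, -, hx⟩)
    · exact hempty h
    · exact Set.singleton_ne_empty x hx

lemma ncard_blockPartition [Finite V] :
    (blockPartition 𝓑).ncard = 𝓑.ncard + (⋃₀ 𝓑)ᶜ.ncard := by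
  have hdisj : Disjoint 𝓑 ((fun x => {x}) '' (⋃₀ 𝓑)ᶜ) := by
    rw [Set.disjoint_left]
    rintro B hB ⟨x, hx, rfl⟩
    exact hx ⟨{x}, hB, rfl⟩
  rw [blockPartition, Set.ncard_union_eq hdisj,
    Set.ncard_image_of_injective _ Set.singleton_injective]

lemma isLocatingPartition_blockPartition (hG : G.Connected) (h𝓑 : 𝓑.PairwiseDisjoint id)
    (hempty : ∅ ∉ 𝓑)
    (hres : ∀ B ∈ 𝓑, ∀ u ∈ B, ∀ v ∈ B, u ≠ v → ¬resolvers G u v ⊆ ⋃₀ 𝓑) :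
    IsLocatingPartition G (blockPartition 𝓑) := by
  refine isLocatingPartition_of_forall_part hG (isPartition_blockPartition h𝓑 hempty) ?_
  rintro S (hS | ⟨x, -, rfl⟩) u hu v hv huv
  · obtain ⟨x, hx, hx𝓑⟩ := Set.not_subset.mp (hres S hS u hu v hv huv)
    exact ⟨{x}, Or.inr ⟨x, hx𝓑, rfl⟩, by rwa [setDist_singleton, setDist_singleton]⟩
  · exact absurd (hu.trans hv.symm) huv

lemma partitionDim_le (hL : IsLocatingPartition G P) : partitionDim G ≤ P.ncard :=
  Nat.sInf_le ⟨P, hL, rfl⟩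

lemma exists_isLocatingPartition_ncard_eq_partitionDim (hG : G.Connected) :
    ∃ P, IsLocatingPartition G P ∧ P.ncard = partitionDim G :=
  Nat.sInf_mem (s := {k | ∃ P : Set (Set V), IsLocatingPartition G P ∧ P.ncard = k})
    ⟨_, _, isLocatingPartition_blockPartition (𝓑 := ∅) hG Set.pairwiseDisjoint_empty
      (Set.notMem_empty _) (by simp), rfl⟩

lemma partitionDim_add_ncard_sUnion_le [Finite V] (hG : G.Connected)
    (h𝓑 : 𝓑.PairwiseDisjoint id) (hempty : ∅ ∉ 𝓑)
    (hres : ∀ B ∈ 𝓑, ∀ u ∈ B, ∀ v ∈ B, u ≠ v → ¬resolvers G u v ⊆ ⋃₀ 𝓑) :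
    partitionDim G + (⋃₀ 𝓑).ncard ≤ Nat.card V + 𝓑.ncard := by
  have h := partitionDim_le (isLocatingPartition_blockPartition hG h𝓑 hempty hres)
  rw [ncard_blockPartition, Set.ncard_compl] at h
  have := Set.ncard_le_card (⋃₀ 𝓑)
  omega

end LocatingPartition

section Blocks

variable {V : Type*} [Finite V] {G : SimpleGraph V} {A B : Set V} {a b c d : V}

lemma partitionDim_add_ncard_le_of_block (hG : G.Connected) (hA : A.Nonempty)
    (hres : ∀ u ∈ A, ∀ v ∈ A, u ≠ v → ¬resolvers G u v ⊆ A) :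
    partitionDim G + A.ncard ≤ Nat.card V + 1 := by
  simpa using partitionDim_add_ncard_sUnion_le hG (𝓑 := {A}) (Set.pairwiseDisjoint_singleton _ _)
    (by simpa [eq_comm] using hA.ne_empty) (by simpa using hres)

lemma partitionDim_add_ncard_le_of_two_blocks (hG : G.Connected) (hA : A.Nonempty)
    (hB : B.Nonempty) (hAB : Disjoint A B)
    (hresA : ∀ u ∈ A, ∀ v ∈ A, u ≠ v → ¬resolvers G u v ⊆ A ∪ B)
    (hresB : ∀ u ∈ B, ∀ v ∈ B, u ≠ v → ¬resolvers G u v ⊆ A ∪ B) :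
    partitionDim G + (A ∪ B).ncard ≤ Nat.card V + 2 := by
  have hne : A ≠ B := by
    rintro rfl
    exact hA.ne_empty (disjoint_self.mp hAB)
  have := partitionDim_add_ncard_sUnion_le hG (𝓑 := {A, B}) ?_ ?_ ?_
  · rwa [Set.sUnion_pair, Set.ncard_pair hne] at this
  · simp [Set.PairwiseDisjoint, Set.pairwise_pair, Function.onFun, hAB, hAB.symm]
  · simp [eq_comm, hA.ne_empty, hB.ne_empty]
  · rintro _ (rfl | rfl) <;> simpa only [Set.sUnion_pair]

lemma partitionDim_add_one_le (hG : G.Connected) (h : ¬IsTwin G a b) :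
    partitionDim G + 1 ≤ Nat.card V := by
  have hres := (isTwin_iff_resolvers_subset hG).not.mp h
  have hab : a ≠ b := by
    rintro rfl
    exact h (IsTwin.refl a)
  have := partitionDim_add_ncard_le_of_block hG (A := {a, b}) (Set.insert_nonempty _ _) ?_
  · rw [Set.ncard_pair hab] at this
    omega
  · rintro u (rfl | rfl) v (rfl | rfl) huv <;>
      first | exact absurd rfl huv | assumption | (rw [resolvers_comm]; assumption)

lemma partitionDim_add_two_le_of_triple (hG : G.Connected) (hab : ¬resolvers G a b ⊆ {a, b, c})
    (hac : ¬resolvers G a c ⊆ {a, b, c}) (hbc : ¬resolvers G b c ⊆ {a, b, c}) :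
    partitionDim G + 2 ≤ Nat.card V := by
  have hne : ∀ {u v : V}, ¬resolvers G u v ⊆ {a, b, c} → u ≠ v := by
    rintro u v h rfl
    simp at h
  have := partitionDim_add_ncard_le_of_block hG (A := {a, b, c}) (Set.insert_nonempty _ _) ?_
  · rw [Set.ncard_eq_three.mpr ⟨a, b, c, hne hab, hne hac, hne hbc, rfl⟩] at this
    omega
  · rintro u (rfl | rfl | rfl) v (rfl | rfl | rfl) huv <;>
      first | exact absurd rfl huv | assumption | (rw [resolvers_comm]; assumption)

lemma partitionDim_add_two_le_of_pairs (hG : G.Connected)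
    (hdisj : Disjoint ({a, b} : Set V) {c, d}) (hab : ¬resolvers G a b ⊆ {a, b} ∪ {c, d})
    (hcd : ¬resolvers G c d ⊆ {a, b} ∪ {c, d}) :
    partitionDim G + 2 ≤ Nat.card V := by
  have hne : ∀ {u v : V}, ¬resolvers G u v ⊆ {a, b} ∪ {c, d} → u ≠ v := by
    rintro u v h rfl
    simp at h
  have := partitionDim_add_ncard_le_of_two_blocks hG (Set.insert_nonempty a {b})
    (Set.insert_nonempty c {d}) hdisj ?_ ?_
  · rw [Set.ncard_union_eq hdisj, Set.ncard_pair (hne hab), Set.ncard_pair (hne hcd)] at this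
    omega
  all_goals
    rintro u (rfl | rfl) v (rfl | rfl) huv <;>
      first | exact absurd rfl huv | assumption | (rw [resolvers_comm]; assumption)

end Blocks

lemma SimpleGraph.Connected.exists_adj_of_mem_of_notMem {V : Type*} {G : SimpleGraph V}
    (hG : G.Connected) {S : Set V} {u v : V} (hu : u ∈ S) (hv : v ∉ S) :
    ∃ x ∈ S, ∃ y ∉ S, G.Adj x y := by
  obtain ⟨p⟩ := hG.preconnected u v
  obtain ⟨d, -, hd₁, hd₂⟩ := p.exists_boundary_dart S hu hv
  exact ⟨d.fst, hd₁, d.snd, hd₂, d.adj⟩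

section TwinClass

variable {V : Type*} {G : SimpleGraph V} {a b p q u z : V}

lemma mem_twinClass_self (u : V) : u ∈ twinClass G u :=
  IsTwin.refl u

lemma isTwin_of_mem_twinClass (ha : a ∈ twinClass G u) (hb : b ∈ twinClass G u) :
    IsTwin G a b :=
  (IsTwin.symm ha).trans hb

lemma disjoint_twinClass (h : ¬IsTwin G p q) : Disjoint (twinClass G p) (twinClass G q) :=
  Set.disjoint_left.mpr fun _ hp hq => h (IsTwin.trans hp (IsTwin.symm hq))

lemma isClique_or_isIndepSet_twinClass (u : V) :
    G.IsClique (twinClass G u) ∨ G.IsIndepSet (twinClass G u) := by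
  refine or_iff_not_imp_right.mpr fun hind => ?_
  simp only [IsIndepSet, Set.Pairwise, not_forall, not_not] at hind
  obtain ⟨x, hx, y, hy, -, hxy⟩ := hind
  have hspread : ∀ x ∈ twinClass G u, ∀ y ∈ twinClass G u, G.Adj x y →
      ∀ z ∈ twinClass G u, z ≠ x → G.Adj x z := by
    intro x hx y hy hxy z hz hzx
    by_cases hzy : z = y
    · exact hzy ▸ hxy
    · exact ((isTwin_of_mem_twinClass hy hz).adj_of_adj hxy.symm (Ne.symm hzx)).symm
  intro a ha b hb hab
  by_cases hax : a = x
  · subst hax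
    exact hspread a ha y hy hxy b hb (Ne.symm hab)
  · exact hspread a ha x hx (hspread x hx y hy hxy a ha hax).symm b hb (Ne.symm hab)

lemma exists_forall_adj_twinClass (hG : G.Connected) (hz : ¬IsTwin G u z) :
    ∃ t, ∀ w ∈ twinClass G u, G.Adj t w := by
  obtain ⟨x, hx, t, ht, hxt⟩ := hG.exists_adj_of_mem_of_notMem (mem_twinClass_self u) hz
  exact ⟨t, fun w hw =>
    ((isTwin_of_mem_twinClass hx hw).adj_of_adj hxt fun h => ht (h ▸ hw)).symm⟩

lemma exists_not_isTwin_of_ncard_lt (h : (twinClass G u).ncard < Nat.card V) :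
    ∃ z, ¬IsTwin G u z := by
  by_contra! hall
  rw [Set.eq_univ_of_forall (s := twinClass G u) hall, Set.ncard_univ] at h
  exact lt_irrefl _ h

variable [Finite V]

lemma bddAbove_ncard_twinClass : BddAbove {k | ∃ u : V, (twinClass G u).ncard = k} :=
  ⟨Nat.card V, by rintro _ ⟨v, rfl⟩; exact Set.ncard_le_card _⟩

lemma ncard_twinClass_le_twinNumber (u : V) : (twinClass G u).ncard ≤ twinNumber G :=
  le_csSup bddAbove_ncard_twinClass ⟨u, rfl⟩

lemma exists_ncard_twinClass_eq_twinNumber [Nonempty V] :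
    ∃ u, (twinClass G u).ncard = twinNumber G :=
  Nat.sSup_mem (s := {k | ∃ u : V, (twinClass G u).ncard = k}) ⟨_, Classical.arbitrary V, rfl⟩
    bddAbove_ncard_twinClass

lemma ncard_twinClass_le_partitionDim (hG : G.Connected) (u : V) :
    (twinClass G u).ncard ≤ partitionDim G := by
  obtain ⟨P, hL, hP⟩ := exists_isLocatingPartition_ncard_eq_partitionDim hG
  calc (twinClass G u).ncard ≤ {T ∈ P | ¬Disjoint T (twinClass G u)}.ncard :=
        hL.ncard_le_of_forall_isTwin hG fun a ha b hb => isTwin_of_mem_twinClass ha hb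
    _ ≤ P.ncard := Set.ncard_le_ncard (Set.sep_subset _ _)
    _ = partitionDim G := hP

lemma ncard_twinClass_lt_partitionDim (hG : G.Connected) (hW : G.IsClique (twinClass G u))
    (hz : ¬IsTwin G u z) : (twinClass G u).ncard < partitionDim G := by
  obtain ⟨P, hL, hP⟩ := exists_isLocatingPartition_ncard_eq_partitionDim hG
  obtain ⟨t, ht⟩ := exists_forall_adj_twinClass hG hz
  obtain ⟨T, hT, hTW⟩ := hL.exists_disjoint_of_isClique hG hW ht
  calc (twinClass G u).ncard ≤ {T ∈ P | ¬Disjoint T (twinClass G u)}.ncard :=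
        hL.ncard_le_of_forall_isTwin hG fun a ha b hb => isTwin_of_mem_twinClass ha hb
    _ < P.ncard := Set.ncard_lt_ncard ⟨Set.sep_subset _ _, fun h => (h hT).2 hTW⟩
    _ = partitionDim G := hP

end TwinClass

section TwoClasses

variable {V : Type*} [Finite V] {G : SimpleGraph V} {p q z : V}

lemma partitionDim_add_two_le_of_three_classes (hG : G.Connected) (hpq : ¬IsTwin G p q)
    (hp : (twinClass G p).Nontrivial) (hq : (twinClass G q).Nontrivial)
    (hpz : ¬IsTwin G p z) (hqz : ¬IsTwin G q z) :
    partitionDim G + 2 ≤ Nat.card V := by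
  obtain ⟨p', hp', hp'p⟩ := hp.exists_ne p
  obtain ⟨q', hq', hq'q⟩ := hq.exists_ne q
  have hPQ := disjoint_twinClass hpq
  have hpq' : p ≠ q' := hPQ.ne_of_mem (mem_twinClass_self p) hq'
  have hp'q : p' ≠ q := hPQ.ne_of_mem hp' (mem_twinClass_self q)
  have hzP : ∀ x ∈ twinClass G p, z ≠ x := fun x hx h => hpz (h ▸ hx)
  have hzQ : ∀ x ∈ twinClass G q, z ≠ x := fun x hx h => hqz (h ▸ hx)
  by_cases hz : z ∈ resolvers G p q
  · have hz' : z ∉ ({p, q} : Set V) ∪ {p', q'} := by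
      simp [hzP p (mem_twinClass_self p), hzQ q (mem_twinClass_self q), hzP p' hp', hzQ q' hq']
    refine partitionDim_add_two_le_of_pairs hG ?_ (fun h => hz' (h hz)) (fun h => hz' (h ?_))
    · simp [hp'p, hp'q, hpq'.symm, hq'q]
    · exact (mem_resolvers_iff_of_isTwin hG hp' hq' (hzP p (mem_twinClass_self p)) (hzP p' hp')
        (hzQ q (mem_twinClass_self q)) (hzQ q' hq')).mp hz
  · refine partitionDim_add_two_le_of_triple (a := p) (b := q) (c := z) hG (fun h => ?_) ?_ ?_
    · obtain ⟨x, hx, hxp, hxq⟩ := exists_mem_resolvers hG hpq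
      obtain rfl : x = z := by simpa [hxp, hxq] using h hx
      exact hz hx
    · have := not_resolvers_subset_of_isTwin hG hpz hq' (c' := q')
        (by simp [hpq'.symm, (hzQ q' hq').symm, hq'q])
      rwa [Set.pair_comm] at this
    · have := not_resolvers_subset_of_isTwin hG hqz hp' (c' := p')
        (by simp [hp'q, (hzP p' hp').symm, hp'p])
      rwa [Set.pair_comm, Set.insert_comm] at this

lemma partitionDim_add_two_le_of_join (hG : G.Connected) {P Q : Set V} (hP : G.IsIndepSet P)
    (hP3 : 2 < P.ncard) (hQ : Q.Nontrivial) (hPQ : ∀ x ∈ P, ∀ y ∈ Q, G.Adj x y) :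
    partitionDim G + 2 ≤ Nat.card V := by
  obtain ⟨a, c, x, ha, hc, hx, hac, hax, hcx⟩ := (Set.two_lt_ncard_iff (Set.toFinite P)).mp hP3
  obtain ⟨b, hb, d, hd, hbd⟩ := hQ
  have hne : ∀ {u v}, u ∈ P → v ∈ Q → u ≠ v := fun hu hv => G.ne_of_adj (hPQ _ hu _ hv)
  have hres : ∀ {u v}, u ∈ P → v ∈ Q → u ≠ x → x ∈ resolvers G u v := fun {u v} hu hv hux => by
    change G.dist u x ≠ G.dist v x
    rw [dist_comm (u := v), dist_eq_one_iff_adj.mpr (hPQ x hx _ hv)]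
    exact fun h => hP hu hx hux (dist_eq_one_iff_adj.mp h)
  have hx' : x ∉ ({a, b} : Set V) ∪ {c, d} := by
    simp [hax.symm, hcx.symm, hne hx hb, hne hx hd]
  refine partitionDim_add_two_le_of_pairs hG ?_ (fun h => hx' (h (hres ha hb hax)))
    (fun h => hx' (h (hres hc hd hcx)))
  simp [hac.symm, hne hc hb, (hne ha hd).symm, hbd.symm]

lemma partitionDim_add_two_le_of_twinClass_union (hG : G.Connected) (h5 : 5 ≤ Nat.card V)
    (hpq : ¬IsTwin G p q) (hp : (twinClass G p).Nontrivial) (hq : (twinClass G q).Nontrivial)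
    (hcover : ∀ v, IsTwin G p v ∨ IsTwin G q v)
    (hclique : ∀ u, (twinClass G u).ncard + 2 = Nat.card V → ¬G.IsClique (twinClass G u)) :
    partitionDim G + 2 ≤ Nat.card V := by
  have hPQ := disjoint_twinClass hpq
  have hcross : ∀ x ∈ twinClass G p, ∀ y ∈ twinClass G q, G.Adj x y := by
    obtain ⟨x, hx, y, hy, hxy⟩ :=
      hG.exists_adj_of_mem_of_notMem (mem_twinClass_self p) (show q ∉ twinClass G p from hpq)
    have hyQ : y ∈ twinClass G q := (hcover y).resolve_left hy
    intro a ha b hb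
    have hay := (isTwin_of_mem_twinClass hx ha).adj_of_adj hxy (hPQ.ne_of_mem ha hyQ).symm
    exact ((isTwin_of_mem_twinClass hyQ hb).adj_of_adj hay.symm (hPQ.ne_of_mem ha hb)).symm
  have hcard : (twinClass G p).ncard + (twinClass G q).ncard = Nat.card V := by
    rw [← Set.ncard_union_eq hPQ, Set.eq_univ_of_forall (s := twinClass G p ∪ twinClass G q) hcover,
      Set.ncard_univ]
  have hP2 := Set.one_lt_ncard_iff_nontrivial.mpr hp
  have hQ2 := Set.one_lt_ncard_iff_nontrivial.mpr hq
  have hQP : ∀ y ∈ twinClass G q, ∀ x ∈ twinClass G p, G.Adj y x := fun y hy x hx =>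
    (hcross x hx y hy).symm
  have hnot : ¬(G.IsClique (twinClass G p) ∧ G.IsClique (twinClass G q)) := fun ⟨hPc, hQc⟩ =>
    hpq <| isTwin_iff_forall_adj_iff.mpr fun x hxp hxq => by
      rcases hcover x with hx | hx
      · exact iff_of_true (hPc (mem_twinClass_self p) hx hxp.symm)
          (hQP q (mem_twinClass_self q) x hx)
      · exact iff_of_true (hcross p (mem_twinClass_self p) x hx)
          (hQc (mem_twinClass_self q) hx hxq.symm)
  rcases isClique_or_isIndepSet_twinClass (G := G) p with hPc | hPi <;>
    rcases isClique_or_isIndepSet_twinClass (G := G) q with hQc | hQi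
  · exact absurd ⟨hPc, hQc⟩ hnot
  · by_cases hQ3 : 2 < (twinClass G q).ncard
    · exact partitionDim_add_two_le_of_join hG hQi hQ3 hp hQP
    · exact absurd hPc (hclique p (by omega))
  · by_cases hP3 : 2 < (twinClass G p).ncard
    · exact partitionDim_add_two_le_of_join hG hPi hP3 hq hcross
    · exact absurd hQc (hclique q (by omega))
  · by_cases hP3 : 2 < (twinClass G p).ncard
    · exact partitionDim_add_two_le_of_join hG hPi hP3 hq hcross
    · exact partitionDim_add_two_le_of_join hG hQi (by omega) hp hQP

lemma partitionDim_add_two_le_of_two_classes (hG : G.Connected) (h5 : 5 ≤ Nat.card V)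
    (hpq : ¬IsTwin G p q) (hp : (twinClass G p).Nontrivial) (hq : (twinClass G q).Nontrivial)
    (hclique : ∀ u, (twinClass G u).ncard + 2 = Nat.card V → ¬G.IsClique (twinClass G u)) :
    partitionDim G + 2 ≤ Nat.card V := by
  by_cases h : ∃ z, ¬IsTwin G p z ∧ ¬IsTwin G q z
  · obtain ⟨z, hpz, hqz⟩ := h
    exact partitionDim_add_two_le_of_three_classes hG hpq hp hq hpz hqz
  · push Not at h
    exact partitionDim_add_two_le_of_twinClass_union hG h5 hpq hp hq
      (fun v => or_iff_not_imp_left.mpr (h v)) hclique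

end TwoClasses

lemma ncard_le_two_of_total_of_functional {α : Type*} {S : Set α} {R : α → α → Prop}
    (htotal : ∀ x ∈ S, ∀ y ∈ S, x ≠ y → R x y ∨ R y x)
    (hfun : ∀ x ∈ S, ∀ y ∈ S, ∀ y' ∈ S, R x y → R x y' → y = y')
    (hback : ∀ x ∈ S, ∀ y ∈ S, ∀ w ∈ S, R x y → R y w → w = x) :
    S.ncard ≤ 2 := by
  by_contra! h
  obtain ⟨a, b, c, ha, hb, hc, hab, hac, hbc⟩ :=
    (Set.two_lt_ncard_iff (Set.finite_of_ncard_pos (by omega))).mp h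
  have key : ∀ a ∈ S, ∀ b ∈ S, ∀ c ∈ S, a ≠ b → a ≠ c → b ≠ c → R a b → False := by
    intro a ha b hb c hc hab hac hbc hRab
    have hRcb : R c b := (htotal b hb c hc hbc).resolve_left fun h =>
      hac (hback a ha b hb c hc hRab h).symm
    rcases htotal a ha c hc hac with hRac | hRca
    · exact hbc (hfun a ha b hb c hc hRab hRac)
    · exact hab (hfun c hc a ha b hb hRca hRcb)
  rcases htotal a ha b hb hab with hRab | hRba
  · exact key a ha b hb c hc hab hac hbc hRab
  · exact key b hb a ha c hc hab.symm hbc hac hRba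

section OneClass

variable {V : Type*} {G : SimpleGraph V} {p p' w x y z z₁ z₂ : V}

lemma dist_eq_of_resolvers_subset (hG : G.Connected) (h : IsTwin G p p') (hzp : z ≠ p)
    (hp' : p' ∉ ({p, z, w} : Set V)) (hsub : resolvers G p z ⊆ {p, z, w}) :
    G.dist p z = G.dist p p' := by
  have hzp' : z ≠ p' := fun h => hp' (by simp [h])
  have hd : G.dist p p' = G.dist z p' := not_not.mp fun hne => hp' (hsub hne)
  rw [hd, h.dist_eq hG hzp hzp', dist_comm]

lemma eq_of_resolvers_subset_of_dist_eq (hG : G.Connected) (hpx : ¬IsTwin G p x) (hxp : x ≠ p)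
    (hxy : resolvers G p x ⊆ {p, x, y}) (hyw : resolvers G p y ⊆ {p, y, w})
    (hd : G.dist p x = G.dist p y) : w = x := by
  by_contra hwx
  obtain ⟨r, hr, hrp, hrx⟩ := exists_mem_resolvers hG hpx
  obtain rfl : r = y := by simpa [hrp, hrx] using hxy hr
  have hd' : G.dist p x = G.dist r x := not_not.mp fun hne => by
    simpa [hxp, hrx.symm, Ne.symm hwx] using hyw hne
  exact hr (by rw [← hd, hd', dist_comm])

lemma ncard_compl_twinClass_le_two (hG : G.Connected) (hp' : p' ∈ twinClass G p) (hp'p : p' ≠ p)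
    (htotal : ∀ z₁ ∉ twinClass G p, ∀ z₂ ∉ twinClass G p, z₁ ≠ z₂ →
      resolvers G p z₁ ⊆ {p, z₁, z₂} ∨ resolvers G p z₂ ⊆ {p, z₂, z₁}) :
    (twinClass G p)ᶜ.ncard ≤ 2 := by
  have hout : ∀ z ∉ twinClass G p, z ≠ p ∧ z ≠ p' := fun z hz =>
    ⟨fun h => hz (by rw [h]; exact mem_twinClass_self p), fun h => hz (h ▸ hp')⟩
  have hdist : ∀ z ∉ twinClass G p, ∀ w ∉ twinClass G p, resolvers G p z ⊆ {p, z, w} →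
      G.dist p z = G.dist p p' := fun z hz w hw hsub =>
    dist_eq_of_resolvers_subset hG hp' (hout z hz).1
      (by simp [hp'p, (hout z hz).2.symm, (hout w hw).2.symm]) hsub
  refine ncard_le_two_of_total_of_functional (R := fun z w => resolvers G p z ⊆ {p, z, w})
    htotal (fun z hz y _ y' _ hy hy' => ?_) (fun x hx y hy w hw hxy hyw => ?_)
  · obtain ⟨r, hr, hrp, hrz⟩ := exists_mem_resolvers hG hz
    obtain rfl : r = y := by simpa [hrp, hrz] using hy hr
    simpa [hrp, hrz] using hy' hr
  · exact eq_of_resolvers_subset_of_dist_eq hG hx (hout x hx).1 hxy hyw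
      ((hdist x hx y hy hxy).trans (hdist y hy w hw hyw).symm)

lemma not_resolvers_subset_of_compl_twinClass_eq_pair (hG : G.Connected)
    (hind : G.IsIndepSet (twinClass G p)) (hp' : p' ∈ twinClass G p) (hp'p : p' ≠ p)
    (hPc : (twinClass G p)ᶜ = {z₁, z₂}) : ¬resolvers G p z₁ ⊆ {p, z₁, z₂} := by
  intro hsub
  have hcover : ∀ v, v ∈ twinClass G p ∨ v = z₁ ∨ v = z₂ := fun v => by
    simpa [← Set.mem_compl_iff, hPc] using Classical.em (v ∈ twinClass G p)
  have hz₁ : z₁ ∉ twinClass G p := by simp [← Set.mem_compl_iff, hPc]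
  have hz₁p : z₁ ≠ p := fun h => hz₁ (by rw [h]; exact mem_twinClass_self p)
  have hnadj : ¬G.Adj p z₁ := by
    have hp'z : p' ∉ ({z₁, z₂} : Set V) := by
      rw [← hPc]
      exact fun h => h hp'
    rw [← dist_eq_one_iff_adj, dist_eq_of_resolvers_subset hG hp' hz₁p
      (by rintro (h | h); exacts [hp'p h, hp'z h]) hsub, dist_eq_one_iff_adj]
    exact hind (mem_twinClass_self p) hp' hp'p.symm
  have : Nontrivial V := ⟨⟨p, p', hp'p.symm⟩⟩
  have hp₂ : G.Adj p z₂ := by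
    obtain ⟨s, hs⟩ := hG.preconnected.exists_adj_of_nontrivial p
    rcases hcover s with hsP | rfl | rfl
    · exact absurd hs (hind (mem_twinClass_self p) hsP (G.ne_of_adj hs))
    · exact absurd hs hnadj
    · exact hs
  have hz₁₂ : G.Adj z₁ z₂ := by
    obtain ⟨t, ht⟩ := hG.preconnected.exists_adj_of_nontrivial z₁
    rcases hcover t with htP | rfl | rfl
    · exact absurd ((IsTwin.symm htP).adj_of_adj ht.symm hz₁p) hnadj
    · exact absurd ht G.irrefl
    · exact ht
  obtain ⟨r, hr, hrp, hrz⟩ := exists_mem_resolvers hG hz₁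
  obtain rfl : r = z₂ := by simpa [hrp, hrz] using hsub hr
  exact hr (by rw [dist_eq_one_iff_adj.mpr hp₂, dist_eq_one_iff_adj.mpr hz₁₂])

lemma partitionDim_add_two_le_of_one_class [Finite V] (hG : G.Connected)
    (hp : (twinClass G p).Nontrivial)
    (hZ : ∀ z₁ ∉ twinClass G p, ∀ z₂ ∉ twinClass G p, IsTwin G z₁ z₂ → z₁ = z₂)
    (hsmall : (twinClass G p).ncard + 2 ≤ Nat.card V)
    (hclique : (twinClass G p).ncard + 2 = Nat.card V → ¬G.IsClique (twinClass G p)) :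
    partitionDim G + 2 ≤ Nat.card V := by
  obtain ⟨p', hp', hp'p⟩ := hp.exists_ne p
  have hp'z : ∀ z ∉ twinClass G p, p' ≠ z := fun z hz h => hz (h ▸ hp')
  by_contra hlt
  have htotal : ∀ z₁ ∉ twinClass G p, ∀ z₂ ∉ twinClass G p, z₁ ≠ z₂ →
      resolvers G p z₁ ⊆ {p, z₁, z₂} ∨ resolvers G p z₂ ⊆ {p, z₂, z₁} := by
    intro z₁ hz₁ z₂ hz₂ h12
    -- otherwise `{p, z₁, z₂}` would be a locating triple
    by_contra! h
    obtain ⟨h₁, h₂⟩ := h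
    rw [Set.pair_comm] at h₂
    refine hlt (partitionDim_add_two_le_of_triple hG h₁ h₂ ?_)
    have := not_resolvers_subset_of_isTwin hG (fun h => h12 (hZ z₁ hz₁ z₂ hz₂ h)) hp' (c' := p')
      (by simp [hp'p, hp'z z₁ hz₁, hp'z z₂ hz₂])
    rwa [Set.pair_comm z₂ p, Set.insert_comm z₁ p] at this
  have hcompl : (twinClass G p)ᶜ.ncard = 2 := by
    have := ncard_compl_twinClass_le_two hG hp' hp'p htotal
    rw [Set.ncard_compl] at this ⊢
    omega
  obtain ⟨z₁, z₂, h12, hPc⟩ := Set.ncard_eq_two.mp hcompl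
  have hind := (isClique_or_isIndepSet_twinClass p).resolve_left (hclique (by
    rw [Set.ncard_compl] at hcompl
    omega))
  have hz₁ : z₁ ∉ twinClass G p := by simp [← Set.mem_compl_iff, hPc]
  have hz₂ : z₂ ∉ twinClass G p := by simp [← Set.mem_compl_iff, hPc]
  rcases htotal z₁ hz₁ z₂ hz₂ h12 with h | h
  · exact not_resolvers_subset_of_compl_twinClass_eq_pair hG hind hp' hp'p hPc h
  · rw [Set.pair_comm] at hPc
    exact not_resolvers_subset_of_compl_twinClass_eq_pair hG hind hp' hp'p hPc h

end OneClass

section NoTwins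

variable {V : Type*} {G : SimpleGraph V}

/-- A triple fails only if one of its pairs is resolved by no vertex outside it; that pair then
determines the triple, and a six-set has `20` triples but only `15` pairs. -/
lemma exists_triple_of_card_eq_six (hG : G.Connected) {S : Finset V} (hS : S.card = 6)
    (hnt : ∀ a ∈ S, ∀ b ∈ S, IsTwin G a b → a = b) :
    ∃ t ⊆ S, t.card = 3 ∧ ∀ u ∈ t, ∀ v ∈ t, u ≠ v → ¬resolvers G u v ⊆ t := by
  by_contra! hbad
  have := Finset.card_le_card_of_forall_subsingleton
    (fun (t e : Finset V) => e ⊆ t ∧ ∀ u ∈ e, ∀ v ∈ e, resolvers G u v ⊆ t)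
    (s := S.powersetCard 3) (t := S.powersetCard 2) ?_ ?_
  · simp [Finset.card_powersetCard, hS, Nat.choose] at this
  · intro t ht
    obtain ⟨htS, ht3⟩ := Finset.mem_powersetCard.mp ht
    obtain ⟨u, hu, v, hv, huv, hsub⟩ := hbad t htS ht3
    refine ⟨{u, v}, Finset.mem_powersetCard.mpr ⟨?_, Finset.card_pair huv⟩, ?_, ?_⟩
    · exact Finset.insert_subset (htS hu) (Finset.singleton_subset_iff.mpr (htS hv))
    · exact Finset.insert_subset hu (Finset.singleton_subset_iff.mpr hv)
    · simp only [Finset.mem_insert, Finset.mem_singleton]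
      rintro x (rfl | rfl) y (rfl | rfl) <;>
        first | simp | exact hsub | (rw [resolvers_comm]; exact hsub)
  · intro e he
    obtain ⟨heS, he2⟩ := Finset.mem_powersetCard.mp he
    obtain ⟨a, b, hab, rfl⟩ := Finset.card_eq_two.mp he2
    obtain ⟨x, hx, hxa, hxb⟩ := exists_mem_resolvers hG fun h =>
      hab (hnt a (heS (by simp)) b (heS (by simp)) h)
    have key : ∀ t ∈ {t ∈ (S.powersetCard 3 : Set (Finset V)) |
        {a, b} ⊆ t ∧ ∀ u ∈ ({a, b} : Finset V), ∀ v ∈ ({a, b} : Finset V),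
          resolvers G u v ⊆ t}, t = {a, b, x} := by
      rintro t ⟨ht, hsub, hres⟩
      have hxt : x ∈ t := hres a (by simp) b (by simp) hx
      refine (Finset.eq_of_subset_of_card_le ?_ ?_).symm
      · exact Finset.insert_subset (hsub (by simp)) (Finset.insert_subset (hsub (by simp))
          (Finset.singleton_subset_iff.mpr hxt))
      · rw [(Finset.mem_powersetCard.mp ht).2, Finset.card_eq_three.mpr
          ⟨a, b, x, hab, hxa.symm, hxb.symm, rfl⟩]
    exact fun t₁ ht₁ t₂ ht₂ => (key t₁ ht₁).trans (key t₂ ht₂).symm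

lemma partitionDim_add_two_le_of_forall_isTwin_eq [Finite V] (hG : G.Connected)
    (h6 : 6 ≤ Nat.card V) (h : ∀ a b, IsTwin G a b → a = b) :
    partitionDim G + 2 ≤ Nat.card V := by
  have := Fintype.ofFinite V
  obtain ⟨S, -, hS⟩ := Finset.exists_subset_card_eq (s := (Finset.univ : Finset V)) (n := 6)
    (by rwa [Finset.card_univ, ← Nat.card_eq_fintype_card])
  obtain ⟨t, -, ht3, ht⟩ := exists_triple_of_card_eq_six hG hS fun a _ b _ => h a b
  have := partitionDim_add_ncard_le_of_block hG (A := ↑t)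
    (Finset.coe_nonempty.mpr (Finset.card_pos.mp (by omega))) (by simpa using ht)
  rw [Set.ncard_coe_finset, ht3] at this
  omega

end NoTwins

theorem partitionDim_add_two_le {V : Type*} [Finite V] {G : SimpleGraph V} (hG : G.Connected)
    (h6 : 6 ≤ Nat.card V) (hsmall : ∀ u, (twinClass G u).ncard + 2 ≤ Nat.card V)
    (hclique : ∀ u, (twinClass G u).ncard + 2 = Nat.card V → ¬G.IsClique (twinClass G u)) :
    partitionDim G + 2 ≤ Nat.card V := by
  by_cases h : ∃ p, (twinClass G p).Nontrivial
  · obtain ⟨p, hp⟩ := h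
    by_cases h' : ∃ q, ¬IsTwin G p q ∧ (twinClass G q).Nontrivial
    · obtain ⟨q, hpq, hq⟩ := h'
      exact partitionDim_add_two_le_of_two_classes hG (by omega) hpq hp hq hclique
    · push Not at h'
      refine partitionDim_add_two_le_of_one_class hG hp (fun z₁ hz₁ z₂ _ h12 => ?_) (hsmall p)
        (hclique p)
      exact h' z₁ hz₁ (mem_twinClass_self z₁) h12
  · push Not at h
    exact partitionDim_add_two_le_of_forall_isTwin_eq hG h6 fun a b hab =>
      h a (mem_twinClass_self a) hab

/-- For a connected graph `G` of order `n ≥ 9`: `β_p(G) = n - 1` iff either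
`τ(G) = n - 1`, or `τ(G) = n - 2` and some twin class of cardinality `n - 2`
induces a complete subgraph. -/
theorem partitionDim_eq_order_sub_one_iff {V : Type*} [Fintype V]
    (G : SimpleGraph V) (hG : G.Connected) (n : ℕ) (hn : Fintype.card V = n)
    (h9 : 9 ≤ n) :
    partitionDim G = n - 1 ↔
      (twinNumber G = n - 1 ∨
        (twinNumber G = n - 2 ∧ ∃ u : V, (twinClass G u).ncard = n - 2 ∧
          ∀ v ∈ twinClass G u, ∀ w ∈ twinClass G u, v ≠ w → G.Adj v w)) := by
  rw [← Nat.card_eq_fintype_card] at hn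
  subst hn
  have : Nonempty V := (Nat.card_pos_iff.mp (by omega)).1
  obtain ⟨u₀, hu₀⟩ := exists_ncard_twinClass_eq_twinNumber (G := G)
  have hτ := ncard_twinClass_le_twinNumber (G := G)
  have hβ := ncard_twinClass_le_partitionDim hG
  constructor
  · intro h
    by_contra hcon
    have hτ₁ : twinNumber G ≠ Nat.card V - 1 := fun h' => hcon (Or.inl h')
    have := partitionDim_add_two_le hG (by omega)
      (fun u => by have := hτ u; have := hβ u₀; omega)
      (fun u hu hclique => hcon (Or.inr ⟨by have := hτ u; have := hβ u₀; omega, u, by omega,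
        hclique⟩))
    omega
  · rintro (hτ₀ | ⟨-, u, hu, hclique⟩)
    · obtain ⟨z, hz⟩ := exists_not_isTwin_of_ncard_lt (G := G) (u := u₀) (by omega)
      have := partitionDim_add_one_le hG hz
      have := hβ u₀
      omega
    · obtain ⟨z, hz⟩ := exists_not_isTwin_of_ncard_lt (G := G) (u := u) (by omega)
      have := partitionDim_add_one_le hG hz
      have := ncard_twinClass_lt_partitionDim hG hclique hz
      omega
end
end

section
/- Let G be a finite connected simple graph of order n ≥ 2 that has a vertex u of degree k. Then β_p(G) ≤ n − min{k, n−1−k}. -/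
/-! Pair off `min k (n - 1 - k)` non-neighbours of `u` with distinct neighbours of `u`, merge each
pair into one part and keep every other vertex as a singleton part. The part `{u}` separates the
two vertices of a pair (only the neighbour is at distance 1 from `u`), and in a connected graph
the unique zero entry of a distance vector identifies the part containing the vertex. -/

open Classical SimpleGraph

noncomputable section

lemma Setoid.ncard_classes_ker_le {α β : Type*} [Finite β] (f : α → β) :
    (Setoid.ker f).classes.ncard ≤ Nat.card β :=
  calc (Setoid.ker f).classes.ncard
      _ ≤ (Set.range fun y => {x | f x = y}).ncard :=
        Set.ncard_le_ncard (Setoid.classes_ker_subset_fiber_set f) (Set.finite_range _)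
      _ ≤ (Set.univ : Set β).ncard := by
        rw [← Set.image_univ]; exact Set.ncard_image_le Set.finite_univ
      _ = Nat.card β := Set.ncard_univ β

namespace SimpleGraph

variable {V : Type*} {G : SimpleGraph V}

lemma setDist_singleton (x v : V) : setDist G x {v} = G.dist x v := by
  simp [setDist]

lemma setDist_eq_zero_iff (hG : G.Connected) {x : V} {S : Set V} (hS : S.Nonempty) :
    setDist G x S = 0 ↔ x ∈ S := by
  refine ⟨fun h => ?_, fun hx => Nat.eq_zero_of_le_zero (Nat.sInf_le ⟨x, hx, dist_self⟩)⟩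
  obtain ⟨w, hw, hxw⟩ := (Nat.sInf_eq_zero.mp h).resolve_right (hS.image _).ne_empty
  rwa [hG.dist_eq_zero_iff.mp hxw]

lemma partitionDim_le_ncard {P : Set (Set V)} (hP : IsLocatingPartition G P) :
    partitionDim G ≤ P.ncard :=
  Nat.sInf_le ⟨P, hP, rfl⟩

lemma isLocatingPartition_classes (hG : G.Connected) (r : Setoid V) (u : V)
    (hu : ∀ x, r x u → x = u) (hinj : ∀ x y, r x y → G.dist x u = G.dist y u → x = y) :
    IsLocatingPartition G r.classes := by
  refine ⟨Setoid.isPartition_classes r, fun x y h => ?_⟩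
  have hclass_u : {z | r z u} = {u} :=
    Set.eq_singleton_iff_unique_mem.mpr ⟨r.refl u, hu⟩
  have hdist : G.dist x u = G.dist y u := by
    simpa only [hclass_u, setDist_singleton] using h _ (r.mem_classes u)
  have hyx : y ∈ {z | r z x} := by
    have hS : ({z | r z x} : Set V).Nonempty := ⟨x, r.refl x⟩
    rw [← setDist_eq_zero_iff hG hS, ← h _ (r.mem_classes x), setDist_eq_zero_iff hG hS]
    exact r.refl x
  exact hinj x y (r.symm hyx) hdist

lemma partitionDim_le_card_sub_of_subset_neighborFinset_compl [Fintype V] (hG : G.Connected)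
    {u : V} {B : Finset V} (hB : B ⊆ Gᶜ.neighborFinset u) (hcard : B.card ≤ G.degree u) :
    partitionDim G ≤ Fintype.card V - B.card := by
  obtain ⟨e, he⟩ := Function.Embedding.exists_of_card_le_finset (α := B)
    (s := G.neighborFinset u) (by simpa using hcard)
  have hadj : ∀ b, G.Adj u (e b) := fun b => by simpa using he ⟨b, rfl⟩
  have hnonadj : ∀ b ∈ B, u ≠ b ∧ ¬G.Adj u b := fun b hb => by
    simpa using hB hb
  have hnotMem : ∀ b, e b ∉ B := fun b hb => (hnonadj _ hb).2 (hadj b)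
  have hdist : ∀ b : B, G.dist b u ≠ G.dist (e b) u := fun b => by
    rw [dist_eq_one_iff_adj.mpr (hadj b).symm, Ne, dist_eq_one_iff_adj]
    exact fun h => (hnonadj b b.2).2 h.symm
  -- the parts are the fibres of `q`, which moves each `b ∈ B` onto its partner `e b`
  let q : V → {x // x ∉ B} := fun x =>
    if h : x ∈ B then ⟨e ⟨x, h⟩, hnotMem _⟩ else ⟨x, h⟩
  have hloc : IsLocatingPartition G (Setoid.ker q).classes := by
    refine isLocatingPartition_classes hG _ u (fun x hx => ?_) (fun x y hxy hxyu => ?_)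
    · have huB : u ∉ B := fun hu => (hnonadj u hu).1 rfl
      by_cases hxB : x ∈ B
      · simp only [Setoid.ker_def, q, dif_pos hxB, dif_neg huB, Subtype.mk.injEq] at hx
        exact absurd hx (hadj _).ne'
      · simpa [Setoid.ker_def, q, hxB, huB] using hx
    · simp only [Setoid.ker_def, q] at hxy
      by_cases hxB : x ∈ B <;> by_cases hyB : y ∈ B <;>
        simp only [hxB, hyB, dif_pos, dif_neg, not_false_eq_true, Subtype.mk.injEq] at hxy
      · exact congrArg Subtype.val (e.injective hxy)
      · exact absurd (hxy ▸ hxyu) (hdist ⟨x, hxB⟩)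
      · exact absurd (hxy ▸ hxyu.symm) (hdist ⟨y, hyB⟩)
      · exact hxy
  calc partitionDim G ≤ (Setoid.ker q).classes.ncard := partitionDim_le_ncard hloc
    _ ≤ Nat.card {x // x ∉ B} := Setoid.ncard_classes_ker_le q
    _ = Fintype.card V - B.card := by
      rw [Nat.card_eq_fintype_card, Fintype.card_subtype_compl, Fintype.card_coe]

end SimpleGraph

theorem partitionDim_le_of_degree_general {V : Type*} [Fintype V]
    (G : SimpleGraph V) (hG : G.Connected) (n : ℕ) (hn : Fintype.card V = n)
    (u : V) (k : ℕ) (hk : (G.neighborSet u).ncard = k) :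
    partitionDim G ≤ n - min k (n - 1 - k) := by
  have hdeg : G.degree u = k := by
    rw [← hk, ← card_neighborFinset_eq_degree, neighborFinset_def, Set.ncard_eq_toFinset_card']
  have hcompl : (Gᶜ.neighborFinset u).card = n - 1 - k := by
    rw [card_neighborFinset_eq_degree, degree_compl, hdeg, hn]
  obtain ⟨B, hB, hBcard⟩ : ∃ B ⊆ Gᶜ.neighborFinset u, B.card = min k (n - 1 - k) :=
    Finset.exists_subset_card_eq (hcompl ▸ min_le_right _ _)
  have hBdeg : B.card ≤ G.degree u := hBcard ▸ hdeg ▸ min_le_left _ _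
  simpa only [hn, hBcard] using
    partitionDim_le_card_sub_of_subset_neighborFinset_compl hG hB hBdeg

/-- If `G` is a connected graph of order `n ≥ 2` with a vertex of degree `k`,
then `β_p(G) ≤ n - min k (n - 1 - k)`. -/
theorem partitionDim_le_of_degree {V : Type*} [Fintype V]
    (G : SimpleGraph V) (hG : G.Connected) (n : ℕ) (hn : Fintype.card V = n)
    (h2 : 2 ≤ n) (u : V) (k : ℕ) (hk : (G.neighborSet u).ncard = k) :
    partitionDim G ≤ n - min k (n - 1 - k) :=
  partitionDim_le_of_degree_general G hG n hn u k hk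
end
end
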